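/- arXiv:math-ph/0106012 — 2 statements merged into one kernel-verified Lean document; each statement's English description precedes it below -/
import Mathlib

section
/- Let (Ω,T) be strictly ergodic with invariant probability measure μ, and let A : Ω → GL(2,ℝ) be continuous. Then limsup_{n→∞} (1/n) log‖A(n,ω)‖ ≤ Λ(A) holds uniformly on Ω; that is, for every ε > 0 there exists N such that (1/n) log‖A(n,ω)‖ ≤ Λ(A) + ε for all n ≥ N and all ω ∈ Ω. -/
open MeasureTheory


noncomputable def opNorm (M : Matrix (Fin 2) (Fin 2) ℝ) : ℝ :=
  ‖LinearMap.toContinuousLinearMap (Matrix.toEuclideanLin M)‖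

variable {Ω : Type*} [MetricSpace Ω] [CompactSpace Ω] [MeasurableSpace Ω] [BorelSpace Ω]

/-- Minimality: every `ℤ`-orbit of the homeomorphism `T` is dense. -/
def IsMinimalSystem (T : Ω ≃ₜ Ω) : Prop :=
  ∀ ω : Ω, Dense (Set.range fun n : ℤ => (T.toEquiv ^ n) ω)

/-- `μ` is a `T`-invariant Borel probability measure. -/
def IsInvProbG (T : Ω ≃ₜ Ω) (μ : Measure Ω) : Prop :=
  IsProbabilityMeasure μ ∧ μ.map T = μ

/-- `(Ω,T)` is uniquely ergodic with unique invariant probability measure `μ`. -/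
def IsUniquelyErgodicWithG (T : Ω ≃ₜ Ω) (μ : Measure Ω) : Prop :=
  IsInvProbG T μ ∧ ∀ ν : Measure Ω, IsInvProbG T ν → ν = μ

/-- `A(n,ω)` for `n ≥ 0`. -/
noncomputable def cocPg (T : Ω ≃ₜ Ω) (A : Ω → Matrix (Fin 2) (Fin 2) ℝ) :
    ℕ → Ω → Matrix (Fin 2) (Fin 2) ℝ
  | 0, _ => 1
  | (k+1), ω => A ((⇑T)^[k] ω) * cocPg T A k ω

/-- The cocycle `A(n,ω)`, `n ∈ ℤ`. -/
noncomputable def cocg (T : Ω ≃ₜ Ω) (A : Ω → Matrix (Fin 2) (Fin 2) ℝ) (n : ℤ) (ω : Ω) :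
    Matrix (Fin 2) (Fin 2) ℝ :=
  if 0 ≤ n then cocPg T A n.toNat ω else (cocPg T A (-n).toNat ((⇑T.symm)^[(-n).toNat] ω))⁻¹

/-- `Λ(A) = inf_{n ≥ 1} (1/n) ∫ log ‖A(n,ω)‖ dμ(ω)`. -/
noncomputable def lyapG (T : Ω ≃ₜ Ω) (μ : Measure Ω) (A : Ω → Matrix (Fin 2) (Fin 2) ℝ) : ℝ :=
  ⨅ n : ℕ+, (1 / (n : ℝ)) * ∫ ω, Real.log (opNorm (cocPg T A (n : ℕ) ω)) ∂μ

/-- `(1/|n|) log ‖A(n,ω)‖ → L` as `|n| → ∞`, uniformly on `Ω`. -/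
def IsUniformG (T : Ω ≃ₜ Ω) (A : Ω → Matrix (Fin 2) (Fin 2) ℝ) (L : ℝ) : Prop :=
  ∀ ε > (0 : ℝ), ∃ N : ℕ, ∀ n : ℤ, (N : ℤ) ≤ |n| → ∀ ω : Ω,
    |(1 / ((|n| : ℤ) : ℝ)) * Real.log (opNorm (cocg T A n ω)) - L| ≤ ε

/-- The Birkhoff averages `A_n(b)(ω)`, `n ∈ ℤ`. -/
noncomputable def birk (T : Ω ≃ₜ Ω) (b : Ω → ℝ) (n : ℤ) (ω : Ω) : ℝ :=
  if 0 ≤ n then (1 / (n : ℝ)) * ∑ k ∈ Finset.range n.toNat, b ((⇑T)^[k] ω)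
  else (1 / ((|n| : ℤ) : ℝ)) * ∑ k ∈ Finset.range (-n).toNat, b ((⇑T.symm)^[k + 1] ω)

/-!
Write `f n ω = log ‖A(n,ω)‖`; it is a continuous subadditive cocycle:
`f (p + q) ω ≤ f p ω + f q (T^p ω)`. Fix `m`. Cutting `[0, n)` into blocks of length `m`
starting at each of the offsets `0, …, m - 1` and averaging the resulting `m` estimates gives,
uniformly in `ω`, `f n ω / n ≤ (1/m) · (1/n) ∑_{k<n} f m (T^k ω) + O(1/n)`.
For a uniquely ergodic system the Birkhoff averages of a continuous `g` are eventually at most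
`∫ g dμ + ε`, uniformly in the point: otherwise a weak limit of empirical measures along bad orbit
segments would be an invariant probability measure, hence `μ`, with `∫ g ≥ ∫ g dμ + ε`.
Choosing `m` with `(1/m) ∫ f m dμ` close to `Λ(A)` gives the claim.
-/

open Filter Topology BoundedContinuousFunction
open scoped ENNReal Matrix.Norms.L2Operator

theorem birkhoffAverage_comp_self {α M : Type*} (R : Type*) [DivisionSemiring R]
    [AddCommMonoid M] [Module R M] (T : α → α) (g : α → M) (n : ℕ) (x : α) :
    birkhoffAverage R T (g ∘ T) n x = birkhoffAverage R T g n (T x) := by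
  simp only [birkhoffAverage, birkhoffSum, Function.comp_apply,
    ← Function.iterate_succ_apply' T, Function.iterate_succ_apply]

theorem sum_birkhoffSum_iterate {α M : Type*} [AddCommMonoid M] (φ : α → α) (g : α → M)
    (m q : ℕ) (x : α) :
    ∑ i ∈ Finset.range m, birkhoffSum φ^[m] g q (φ^[i] x) = birkhoffSum φ g (m * q) x := by
  induction q generalizing x with
  | zero => simp
  | succ q ih =>
    have hcomm : ∀ i, φ^[m] (φ^[i] x) = φ^[i] (φ^[m] x) := fun i ↦ by
      rw [← Function.iterate_add_apply, add_comm, Function.iterate_add_apply]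
    simp only [birkhoffSum_succ', hcomm, Finset.sum_add_distrib, ih]
    rw [mul_add, mul_one, add_comm _ m, birkhoffSum_add]
    rfl

theorem tendsto_birkhoffAverage_apply_sub_of_tendsto_atTop {X ι : Type*} [TopologicalSpace X]
    {l : Filter ι} {n : ι → ℕ} (hn : Tendsto n l atTop) (T : X → X) (f : X →ᵇ ℝ) (x : ι → X) :
    Tendsto (fun i ↦ birkhoffAverage ℝ T f (n i) (T (x i)) - birkhoffAverage ℝ T f (n i) (x i))
      l (𝓝 0) := by
  have hbound : Tendsto (fun i ↦ 2 * ‖f‖ / n i) l (𝓝 0) :=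
    (tendsto_const_div_atTop_nhds_zero_nat _).comp hn
  refine squeeze_zero_norm (fun i ↦ ?_) hbound
  rw [← dist_eq_norm, dist_birkhoffAverage_apply_birkhoffAverage]
  gcongr
  exact f.dist_le_two_norm _ _

section EmpiricalMeasure

variable {X : Type*} [MeasurableSpace X]

noncomputable def empiricalMeasure (T : X → X) (n : ℕ) (x : X) : Measure X :=
  (n : ℝ≥0∞)⁻¹ • ∑ k ∈ Finset.range n, Measure.dirac (T^[k] x)

theorem isProbabilityMeasure_empiricalMeasure (T : X → X) {n : ℕ} (hn : n ≠ 0) (x : X) :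
    IsProbabilityMeasure (empiricalMeasure T n x) := by
  constructor
  simp [empiricalMeasure, ENNReal.inv_mul_cancel, hn]

theorem integral_empiricalMeasure [MeasurableSingletonClass X] (T : X → X) (n : ℕ) (x : X)
    (g : X → ℝ) : ∫ y, g y ∂empiricalMeasure T n x = birkhoffAverage ℝ T g n x := by
  rw [empiricalMeasure, integral_smul_measure,
    integral_finsetSum_measure fun _ _ ↦ integrable_dirac enorm_lt_top]
  simp [birkhoffAverage, birkhoffSum, integral_dirac]

end EmpiricalMeasure

section UniformBirkhoff

variable {X : Type*} [MetricSpace X] [MeasurableSpace X] [BorelSpace X]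

theorem map_eq_of_tendsto_empiricalMeasure {T : X → X} (hT : Continuous T) {ι : Type*}
    {l : Filter ι} [l.NeBot] {n : ι → ℕ} (hn : Tendsto n l atTop) {x : ι → X}
    {νs : ι → ProbabilityMeasure X} (hνs : ∀ i, (νs i : Measure X) = empiricalMeasure T (n i) (x i))
    {ν : ProbabilityMeasure X} (hν : Tendsto νs l (𝓝 ν)) :
    (ν : Measure X).map T = ν := by
  refine ext_of_forall_integral_eq_of_IsFiniteMeasure fun f ↦ ?_
  rw [integral_map hT.aemeasurable f.continuous.aestronglyMeasurable]
  have hfT := ProbabilityMeasure.tendsto_iff_forall_integral_tendsto.1 hν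
    (f.compContinuous ⟨T, hT⟩)
  have hf := ProbabilityMeasure.tendsto_iff_forall_integral_tendsto.1 hν f
  simp only [hνs, integral_empiricalMeasure] at hfT hf
  refine tendsto_nhds_unique hfT ?_
  simpa [birkhoffAverage_comp_self] using
    hf.add (tendsto_birkhoffAverage_apply_sub_of_tendsto_atTop hn T f x)

theorem eventually_forall_birkhoffAverage_le [CompactSpace X] {T : X → X} (hT : Continuous T)
    {μ : Measure X} (hμ : ∀ ν : Measure X, IsProbabilityMeasure ν → ν.map T = ν → ν = μ)
    {g : X → ℝ} (hg : Continuous g) {ε : ℝ} (hε : 0 < ε) :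
    ∀ᶠ n in atTop, ∀ x, birkhoffAverage ℝ T g n x ≤ ∫ y, g y ∂μ + ε := by
  by_contra h
  obtain ⟨n, hn_mono, hn⟩ := extraction_of_frequently_atTop
    ((not_eventually.1 h).and_eventually (eventually_ne_atTop 0))
  simp only [not_forall, not_le] at hn
  choose x hx using fun j ↦ (hn j).1
  let νs j : ProbabilityMeasure X :=
    ⟨empiricalMeasure T (n j) (x j), isProbabilityMeasure_empiricalMeasure T (hn j).2 (x j)⟩
  let 𝒰 := Ultrafilter.of (atTop : Filter ℕ)
  obtain ⟨ν, -, hν⟩ := isCompact_univ.ultrafilter_le_nhds (𝒰.map νs) (by simp)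
  have hνμ : (ν : Measure X) = μ := hμ ν inferInstance <|
    map_eq_of_tendsto_empiricalMeasure hT (hn_mono.tendsto_atTop.mono_left (Ultrafilter.of_le _))
      (fun _ ↦ rfl) hν
  have hg' : Tendsto (fun j ↦ ∫ y, g y ∂(νs j : Measure X)) 𝒰 (𝓝 (∫ y, g y ∂(ν : Measure X))) :=
    ProbabilityMeasure.tendsto_iff_forall_integral_tendsto.1 hν (mkOfCompact ⟨g, hg⟩)
  simp only [νs, hνμ, ProbabilityMeasure.coe_mk, integral_empiricalMeasure] at hg'
  have := ge_of_tendsto hg' (.of_forall fun j ↦ (hx j).le)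
  linarith

end UniformBirkhoff

section SubadditiveCocycle

variable {α : Type*} {φ : α → α} {f : ℕ → α → ℝ}

theorem le_mul_of_subadditive_cocycle (hf : ∀ p q x, f (p + q) x ≤ f p x + f q (φ^[p] x))
    (h0 : ∀ x, f 0 x ≤ 0) {C : ℝ} (hC : ∀ x, f 1 x ≤ C) (n : ℕ) (x : α) : f n x ≤ n * C := by
  induction n generalizing x with
  | zero => simpa using h0 x
  | succ n ih =>
    calc f (n + 1) x ≤ f n x + f 1 (φ^[n] x) := hf n 1 x
      _ ≤ n * C + C := add_le_add (ih x) (hC _)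
      _ = (n + 1 : ℕ) * C := by push_cast; ring

theorem le_birkhoffSum_iterate_add (hf : ∀ p q x, f (p + q) x ≤ f p x + f q (φ^[p] x))
    (m q s : ℕ) (x : α) :
    f (m * q + s) x ≤ birkhoffSum φ^[m] (f m) q x + f s (φ^[m * q] x) := by
  induction q generalizing x with
  | zero => simp
  | succ q ih =>
    calc f (m * (q + 1) + s) x = f (m + (m * q + s)) x := by ring_nf
      _ ≤ f m x + f (m * q + s) (φ^[m] x) := hf _ _ _
      _ ≤ f m x + (birkhoffSum φ^[m] (f m) q (φ^[m] x) + f s (φ^[m * q] (φ^[m] x))) := by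
        gcongr; exact ih _
      _ = birkhoffSum φ^[m] (f m) (q + 1) x + f s (φ^[m * (q + 1)] x) := by
        rw [birkhoffSum_succ', ← Function.iterate_add_apply, mul_add, mul_one, add_assoc]

theorem mul_le_birkhoffSum_add (hf : ∀ p q x, f (p + q) x ≤ f p x + f q (φ^[p] x))
    (h0 : ∀ x, f 0 x ≤ 0) {C : ℝ} (hC : ∀ x, f 1 x ≤ C) (m q r : ℕ) (x : α) :
    m * f (m * (q + 1) + r) x ≤ birkhoffSum φ (f m) (m * q) x + m * ((m + r) * C) := by
  have hsplit : ∀ i < m, f (m * (q + 1) + r) x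
      ≤ birkhoffSum φ^[m] (f m) q (φ^[i] x) + (m + r) * C := by
    intro i hi
    calc f (m * (q + 1) + r) x = f (i + (m * q + (m - i + r))) x := by
          congr 1; rw [mul_add]; omega
      _ ≤ f i x + f (m * q + (m - i + r)) (φ^[i] x) := hf _ _ _
      _ ≤ i * C + (birkhoffSum φ^[m] (f m) q (φ^[i] x) + (m - i + r : ℕ) * C) := by
        gcongr
        · exact le_mul_of_subadditive_cocycle hf h0 hC i x
        · exact (le_birkhoffSum_iterate_add hf m q _ _).trans
            (by gcongr; exact le_mul_of_subadditive_cocycle hf h0 hC _ _)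
      _ = _ := by push_cast [Nat.cast_sub hi.le]; ring
  calc (m : ℝ) * f (m * (q + 1) + r) x = ∑ _i ∈ Finset.range m, f (m * (q + 1) + r) x := by
        simp
    _ ≤ ∑ i ∈ Finset.range m, (birkhoffSum φ^[m] (f m) q (φ^[i] x) + (m + r) * C) :=
        Finset.sum_le_sum fun i hi ↦ hsplit i (Finset.mem_range.1 hi)
    _ = _ := by simp [Finset.sum_add_distrib, sum_birkhoffSum_iterate]

theorem exists_div_le_birkhoffAverage_div_add
    (hf : ∀ p q x, f (p + q) x ≤ f p x + f q (φ^[p] x)) (h0 : ∀ x, f 0 x ≤ 0) {C : ℝ}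
    (hC : ∀ x, f 1 x ≤ C) {m : ℕ} (hm : 0 < m) {F : ℝ} (hF : ∀ x, -F ≤ f m x) :
    ∃ B : ℝ, ∀ n ≥ m, ∀ x, f n x / n ≤ birkhoffAverage ℝ φ (f m) n x / m + B / n := by
  set B := 2 * (m * |C| + |F|)
  refine ⟨B, fun n hn x ↦ ?_⟩
  obtain ⟨q, r, hr, hqr⟩ : ∃ q r, r < m ∧ n = m * (q + 1) + r := by
    refine ⟨n / m - 1, n % m, Nat.mod_lt _ hm, ?_⟩
    rw [Nat.sub_add_cancel ((Nat.one_le_div_iff hm).2 hn), Nat.div_add_mod]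
  have htail : -((m + r : ℕ) * F) ≤ birkhoffSum φ (f m) (m + r) (φ^[m * q] x) := by
    simpa [birkhoffSum] using Finset.card_nsmul_le_sum (Finset.range (m + r)) _ (-F)
      fun k _ ↦ hF (φ^[k] (φ^[m * q] x))
  have hsum : birkhoffSum φ (f m) n x
      = birkhoffSum φ (f m) (m * q) x + birkhoffSum φ (f m) (m + r) (φ^[m * q] x) := by
    rw [hqr, ← birkhoffSum_add, mul_add, mul_one, add_assoc]
  have hmul : m * f n x ≤ birkhoffSum φ (f m) n x + m * B := by
    have := hqr ▸ mul_le_birkhoffSum_add hf h0 hC m q r x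
    have hmr : (m + r : ℝ) ≤ 2 * m := by norm_cast; omega
    have hCm : (m + r : ℝ) * C ≤ 2 * m * |C| := by nlinarith [le_abs_self C, abs_nonneg C]
    have hFm : (m + r : ℝ) * F ≤ 2 * m * |F| := by nlinarith [le_abs_self F, abs_nonneg F]
    push_cast at htail
    nlinarith
  have hm' : (0 : ℝ) < m := by exact_mod_cast hm
  have hn' : (0 : ℝ) < n := by exact_mod_cast hm.trans_le hn
  calc f n x / n = m * f n x / (m * n) := by field_simp
    _ ≤ (birkhoffSum φ (f m) n x + m * B) / (m * n) := by gcongr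
    _ = _ := by simp only [birkhoffAverage, smul_eq_mul]; field_simp

end SubadditiveCocycle

theorem opNorm_eq_norm (M : Matrix (Fin 2) (Fin 2) ℝ) : opNorm M = ‖M‖ := rfl

theorem log_norm_mul_le_of_isUnit {R : Type*} [NormedRing R] [Nontrivial R] {a b : R}
    (ha : IsUnit a) (hb : IsUnit b) : Real.log ‖a * b‖ ≤ Real.log ‖a‖ + Real.log ‖b‖ := by
  rw [← Real.log_mul (norm_ne_zero_iff.2 ha.ne_zero) (norm_ne_zero_iff.2 hb.ne_zero)]
  exact Real.log_le_log (norm_pos_iff.2 (ha.mul hb).ne_zero) (norm_mul_le a b)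

section MatrixCocycle

variable {X : Type*} [MetricSpace X] (T : X ≃ₜ X) (A : X → Matrix (Fin 2) (Fin 2) ℝ)

theorem cocPg_add (p q : ℕ) (x : X) :
    cocPg T A (p + q) x = cocPg T A q ((⇑T)^[p] x) * cocPg T A p x := by
  induction q with
  | zero => simp [cocPg]
  | succ q ih =>
    rw [← add_assoc, cocPg, ih, cocPg, mul_assoc, add_comm p q, Function.iterate_add_apply]

theorem isUnit_cocPg (hA : ∀ x, IsUnit (A x)) (n : ℕ) (x : X) : IsUnit (cocPg T A n x) := by
  induction n with
  | zero => exact isUnit_one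
  | succ n ih => exact (hA _).mul ih

theorem continuous_cocPg (hA : Continuous A) (n : ℕ) : Continuous (cocPg T A n) := by
  induction n with
  | zero => exact continuous_const
  | succ n ih => exact (hA.comp (T.continuous.iterate n)).mul ih

theorem log_opNorm_cocPg_add_le (hA : ∀ x, IsUnit (A x)) (p q : ℕ) (x : X) :
    Real.log (opNorm (cocPg T A (p + q) x))
      ≤ Real.log (opNorm (cocPg T A p x)) + Real.log (opNorm (cocPg T A q ((⇑T)^[p] x))) := by
  rw [add_comm (Real.log _)]
  exact cocPg_add T A p q x ▸ log_norm_mul_le_of_isUnit (isUnit_cocPg T A hA _ _)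
    (isUnit_cocPg T A hA _ _)

theorem log_opNorm_cocPg_zero (x : X) : Real.log (opNorm (cocPg T A 0 x)) = 0 := by
  simp [cocPg, opNorm_eq_norm]

theorem continuous_log_opNorm_cocPg (hAc : Continuous A) (hA : ∀ x, IsUnit (A x)) (n : ℕ) :
    Continuous fun x ↦ Real.log (opNorm (cocPg T A n x)) :=
  (continuous_cocPg T A hAc n).norm.log fun x ↦
    norm_ne_zero_iff.2 (isUnit_cocPg T A hA n x).ne_zero

end MatrixCocycle

theorem limsup_le_lyapunov_uniformly_general
    {Ω : Type*} [MetricSpace Ω] [CompactSpace Ω] [MeasurableSpace Ω] [BorelSpace Ω]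
    (T : Ω ≃ₜ Ω) (μ : Measure Ω)
    (hue : IsUniquelyErgodicWithG T μ)
    (A : Ω → Matrix (Fin 2) (Fin 2) ℝ) (hAcont : Continuous A)
    (hAinv : ∀ ω : Ω, IsUnit (A ω)) :
    ∀ ε > (0 : ℝ), ∃ N : ℕ, ∀ n : ℕ, N ≤ n → ∀ ω : Ω,
      (1 / (n : ℝ)) * Real.log (opNorm (cocPg T A n ω)) ≤ lyapG T μ A + ε := by
  intro ε hε
  set f : ℕ → Ω → ℝ := fun n ω ↦ Real.log (opNorm (cocPg T A n ω))
  have hfc := continuous_log_opNorm_cocPg T A hAcont hAinv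
  obtain ⟨m, hm⟩ : ∃ m : ℕ+, 1 / (m : ℝ) * ∫ ω, f m ω ∂μ < lyapG T μ A + ε / 2 :=
    exists_lt_of_ciInf_lt (lt_add_of_pos_right (lyapG T μ A) (half_pos hε))
  obtain ⟨C, hC⟩ := isCompact_univ.exists_bound_of_continuousOn (hfc 1).continuousOn
  obtain ⟨F, hF⟩ := isCompact_univ.exists_bound_of_continuousOn (hfc m).continuousOn
  obtain ⟨B, hB⟩ := exists_div_le_birkhoffAverage_div_add (f := f)
    (log_opNorm_cocPg_add_le T A hAinv) (fun ω ↦ (log_opNorm_cocPg_zero T A ω).le)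
    (fun ω ↦ (Real.le_norm_self _).trans (hC ω trivial)) m.pos
    (fun ω ↦ neg_le_of_abs_le ((Real.norm_eq_abs _).symm.trans_le (hF ω trivial)))
  have hbirk := eventually_forall_birkhoffAverage_le T.continuous
    (fun ν h₁ h₂ ↦ hue.2 ν ⟨h₁, h₂⟩) (hfc m) (ε := m * ε / 4) (by positivity)
  have hBn : ∀ᶠ n : ℕ in atTop, B / n ≤ ε / 4 :=
    (tendsto_const_div_atTop_nhds_zero_nat B).eventually (ge_mem_nhds (by linarith))
  obtain ⟨N, hN⟩ := eventually_atTop.1 (hbirk.and (hBn.and (eventually_ge_atTop (m : ℕ))))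
  refine ⟨N, fun n hn ω ↦ ?_⟩
  obtain ⟨havg, hB_small, hmn⟩ := hN n hn
  have hm₀ : (0 : ℝ) < m := by exact_mod_cast m.pos
  rw [one_div_mul_eq_div]
  calc f n ω / n ≤ birkhoffAverage ℝ T (f m) n ω / m + B / n := hB n hmn ω
    _ ≤ (∫ ω, f m ω ∂μ + m * ε / 4) / m + ε / 4 := by gcongr; exact havg ω
    _ = 1 / (m : ℝ) * ∫ ω, f m ω ∂μ + ε / 2 := by field_simp; ring
    _ ≤ lyapG T μ A + ε := by linarith

/-- `limsup_{n→∞} (1/n) log ‖A(n,ω)‖ ≤ Λ(A)` uniformly on `Ω`. -/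
theorem limsup_le_lyapunov_uniformly
    {Ω : Type*} [MetricSpace Ω] [CompactSpace Ω] [MeasurableSpace Ω] [BorelSpace Ω]
    (T : Ω ≃ₜ Ω) (μ : Measure Ω)
    (hmin : IsMinimalSystem T) (hue : IsUniquelyErgodicWithG T μ)
    (A : Ω → Matrix (Fin 2) (Fin 2) ℝ) (hAcont : Continuous A)
    (hAinv : ∀ ω : Ω, IsUnit (A ω)) :
    ∀ ε > (0 : ℝ), ∃ N : ℕ, ∀ n : ℕ, N ≤ n → ∀ ω : Ω,
      (1 / (n : ℝ)) * Real.log (opNorm (cocPg T A n ω)) ≤ lyapG T μ A + ε :=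
  limsup_le_lyapunov_uniformly_general T μ hue A hAcont hAinv
end

section
/- Let (Ω,T) be a strictly ergodic subshift over a finite alphabet A ⊂ ℝ and let E ∈ ℝ be such that M^E is uniform and γ(E) > 0. Then for every ω ∈ Ω, every polynomially bounded solution of the difference equation u(n+1) + u(n−1) + (ω(n) − E)u(n) = 0 (n ∈ ℤ) is identically zero; here u : ℤ → ℝ is polynomially bounded if there exist C > 0 and k ∈ ℕ with |u(n)| ≤ C(1+|n|)^k for all n ∈ ℤ. -/
open MeasureTheory

/-- The `n`-th power of the shift: `(shiftZ n ω) m = ω (m + n)`. -/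
def shiftZ (n : ℤ) (ω : ℤ → ℝ) : ℤ → ℝ := fun m => ω (m + n)

/-- The shift `T`. -/
def shift : (ℤ → ℝ) → (ℤ → ℝ) := shiftZ 1

/-- `Ω` is a subshift over the finite alphabet `A ⊂ ℝ`. -/
structure IsSubshift (A : Finset ℝ) (Ω : Set (ℤ → ℝ)) : Prop where
  closed : IsClosed Ω
  vals : ∀ ω ∈ Ω, ∀ n : ℤ, ω n ∈ A
  inv : shift '' Ω = Ω

/-- Minimality: every orbit is dense (in `Ω`). -/
def IsMinimalSubshift (Ω : Set (ℤ → ℝ)) : Prop :=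
  ∀ ω ∈ Ω, ∀ ω' ∈ Ω, ω' ∈ closure {x | ∃ n : ℤ, shiftZ n ω = x}

/-- `μ` is a `T`-invariant Borel probability measure on `Ω`. -/
def IsInvProb (Ω : Set (ℤ → ℝ)) (μ : Measure (ℤ → ℝ)) : Prop :=
  IsProbabilityMeasure μ ∧ μ Ωᶜ = 0 ∧ μ.map shift = μ

/-- `(Ω,T)` is uniquely ergodic with unique invariant probability measure `μ`. -/
def IsUniquelyErgodicWith (Ω : Set (ℤ → ℝ)) (μ : Measure (ℤ → ℝ)) : Prop :=
  IsInvProb Ω μ ∧ ∀ ν : Measure (ℤ → ℝ), IsInvProb Ω ν → ν = μ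

/-- The one-step transfer matrix `M^E(ω)`. -/
noncomputable def transferMat (E : ℝ) (ω : ℤ → ℝ) : Matrix (Fin 2) (Fin 2) ℝ :=
  !![E - ω 1, -1; 1, 0]

/-- `M^E(n, ω)` for `n ≥ 0`. -/
noncomputable def cocP (E : ℝ) : ℕ → (ℤ → ℝ) → Matrix (Fin 2) (Fin 2) ℝ
  | 0, _ => 1
  | (k+1), ω => transferMat E (shiftZ k ω) * cocP E k ω

/-- The transfer matrix cocycle `M^E(n, ω)`, `n ∈ ℤ`. -/
noncomputable def coc (E : ℝ) (n : ℤ) (ω : ℤ → ℝ) : Matrix (Fin 2) (Fin 2) ℝ :=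
  if 0 ≤ n then cocP E n.toNat ω else (cocP E (-n).toNat (shiftZ n ω))⁻¹

/-- The Lyapunov exponent `γ(E) = inf_{n ≥ 1} (1/n) ∫ log ‖M^E(n,ω)‖ dμ(ω)`. -/
noncomputable def lyap (μ : Measure (ℤ → ℝ)) (E : ℝ) : ℝ :=
  ⨅ n : ℕ+, (1 / (n : ℝ)) * ∫ ω, Real.log (opNorm (cocP E (n : ℕ) ω)) ∂μ

/-- `(1/|n|) log ‖M^E(n,ω)‖ → L` as `|n| → ∞`, uniformly in `ω ∈ Ω`. -/
def IsUniformAt (Ω : Set (ℤ → ℝ)) (E : ℝ) (L : ℝ) : Prop :=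
  ∀ ε > (0 : ℝ), ∃ N : ℕ, ∀ n : ℤ, (N : ℤ) ≤ |n| → ∀ ω ∈ Ω,
    |(1 / ((|n| : ℤ) : ℝ)) * Real.log (opNorm (coc E n ω)) - L| ≤ ε

/-- `ℓ²(ℤ)`. -/
noncomputable abbrev ellTwo := lp (fun _ : ℤ => ℝ) 2

/-- `H` is the Schrödinger operator with potential `ω`:
`(H u)(n) = u(n+1) + u(n-1) + ω(n) u(n)`. -/
def IsSchrodingerOp (ω : ℤ → ℝ) (H : ellTwo →L[ℝ] ellTwo) : Prop :=
  ∀ u : ellTwo, ∀ n : ℤ, H u n = u (n + 1) + u (n - 1) + ω n * u n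

/-!
Let `u ≠ 0` be a solution and write `x, y, z` for its vectors `(u(m+1), u(m))` at `m = -n, 0, n`,
so that `A x = y` and `B y = z` for the transfer matrices `A = M(n, T⁻ⁿω)` and
`B = M(n, ω)`, with `B A = M(2n, T⁻ⁿω)`. Since `det A = 1`, the vector `A x⊥` is pinned down
by `y` up to a multiple of `y` itself, and this gives the elementary bound
`‖y‖ ‖B A‖ ≤ 3 max(‖A‖, ‖B‖) max(‖x‖, ‖z‖)`. Uniformity bounds `‖A‖, ‖B‖` by `e^{(5γ/4) n}`
and `‖B A‖` from below by `e^{(3γ/4) 2n}`, so `max(‖x‖, ‖z‖) ≥ ‖y‖ e^{γ n/4} / 3`: every nonzero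
solution grows exponentially in one of the two directions, which is impossible for a
polynomially bounded one.
-/

open Filter Topology
open scoped RealInnerProductSpace

local notation "ℝ²" => EuclideanSpace ℝ (Fin 2)

def perp (x : ℝ²) : ℝ² := !₂[-x 1, x 0]

lemma norm_sq_eq_fin_two (x : ℝ²) : ‖x‖ ^ 2 = x 0 ^ 2 + x 1 ^ 2 := by
  simp [EuclideanSpace.norm_sq_eq, Fin.sum_univ_two]

lemma inner_eq_fin_two (x y : ℝ²) : ⟪x, y⟫ = x 0 * y 0 + x 1 * y 1 := by
  simp [PiLp.inner_apply, Fin.sum_univ_two, mul_comm]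

lemma norm_perp (x : ℝ²) : ‖perp x‖ = ‖x‖ := by
  rw [← sq_eq_sq₀ (norm_nonneg _) (norm_nonneg _), norm_sq_eq_fin_two, norm_sq_eq_fin_two]
  simp only [perp, Matrix.cons_val_zero, Matrix.cons_val_one]; ring

lemma norm_sq_smul_eq_inner_smul_add (x w : ℝ²) :
    ‖x‖ ^ 2 • w = ⟪w, x⟫ • x + ⟪w, perp x⟫ • perp x := by
  ext i
  fin_cases i <;>
    simp only [norm_sq_eq_fin_two, inner_eq_fin_two, perp, PiLp.add_apply, PiLp.smul_apply,
      smul_eq_mul, Matrix.cons_val_zero, Matrix.cons_val_one, Fin.zero_eta, Fin.mk_one] <;>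
    ring

lemma norm_mul_opNorm_le_add_apply_perp {F : Type*} [NormedAddCommGroup F] [NormedSpace ℝ F]
    (f : ℝ² →L[ℝ] F) (x : ℝ²) : ‖x‖ * ‖f‖ ≤ ‖f x‖ + ‖f (perp x)‖ := by
  rcases eq_or_ne x 0 with rfl | hx
  · simp
  have hx' : 0 < ‖x‖ := norm_pos_iff.mpr hx
  rw [mul_comm, ← le_div_iff₀ hx']
  refine f.opNorm_le_bound (by positivity) fun w => ?_
  rw [div_mul_eq_mul_div, le_div_iff₀ hx']
  have hw : ‖x‖ ^ 2 * ‖f w‖ ≤ ‖w‖ * ‖x‖ * (‖f x‖ + ‖f (perp x)‖) := by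
    calc ‖x‖ ^ 2 * ‖f w‖ = ‖f (‖x‖ ^ 2 • w)‖ := by
          rw [map_smul, norm_smul, Real.norm_of_nonneg (by positivity)]
      _ ≤ |⟪w, x⟫| * ‖f x‖ + |⟪w, perp x⟫| * ‖f (perp x)‖ := by
          rw [norm_sq_smul_eq_inner_smul_add, map_add, map_smul, map_smul]
          exact (norm_add_le _ _).trans_eq (by rw [norm_smul, norm_smul]; rfl)
      _ ≤ ‖w‖ * ‖x‖ * ‖f x‖ + ‖w‖ * ‖x‖ * ‖f (perp x)‖ := by
          gcongr
          · exact abs_real_inner_le_norm w x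
          · exact (abs_real_inner_le_norm w _).trans_eq (by rw [norm_perp])
      _ = _ := by ring
  nlinarith

local notation "𝒯" => Matrix.toEuclideanCLM (𝕜 := ℝ) (n := Fin 2)

/-- `det M = 1` says exactly that the cross product of `M x` and `M (perp x)` is `‖x‖²`. -/
lemma norm_sq_smul_apply_perp_of_det_eq_one {M : Matrix (Fin 2) (Fin 2) ℝ} (hM : M.det = 1)
    (x : ℝ²) :
    ‖𝒯 M x‖ ^ 2 • 𝒯 M (perp x) = ⟪𝒯 M (perp x), 𝒯 M x⟫ • 𝒯 M x + ‖x‖ ^ 2 • perp (𝒯 M x) := by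
  rw [Matrix.det_fin_two] at hM
  ext i
  fin_cases i <;>
    simp only [norm_sq_eq_fin_two, inner_eq_fin_two, perp, PiLp.add_apply, PiLp.smul_apply,
      smul_eq_mul, Matrix.cons_val_zero, Matrix.cons_val_one, Fin.zero_eta, Fin.mk_one,
      Matrix.ofLp_toEuclideanCLM, Matrix.mulVec_fin_two]
  · linear_combination (-(M 1 0 * x 0 + M 1 1 * x 1)) * (x 0 ^ 2 + x 1 ^ 2) * hM
  · linear_combination (M 0 0 * x 0 + M 0 1 * x 1) * (x 0 ^ 2 + x 1 ^ 2) * hM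

lemma norm_mul_norm_apply_perp_le {A : Matrix (Fin 2) (Fin 2) ℝ} (hA : A.det = 1)
    (g : ℝ² →L[ℝ] ℝ²) (x : ℝ²) :
    ‖𝒯 A x‖ * ‖g (𝒯 A (perp x))‖ ≤ ‖x‖ * (‖𝒯 A‖ * ‖g (𝒯 A x)‖ + ‖g‖ * ‖x‖) := by
  set y := 𝒯 A x
  rcases eq_or_ne y 0 with hy | hy
  · rw [hy, norm_zero, zero_mul]; positivity
  have hy' : 0 < ‖y‖ := norm_pos_iff.mpr hy
  refine le_of_mul_le_mul_left ?_ hy'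
  calc ‖y‖ * (‖y‖ * ‖g (𝒯 A (perp x))‖) = ‖g (‖y‖ ^ 2 • 𝒯 A (perp x))‖ := by
        rw [map_smul, norm_smul, Real.norm_of_nonneg (by positivity)]; ring
    _ ≤ |⟪𝒯 A (perp x), y⟫| * ‖g y‖ + ‖x‖ ^ 2 * ‖g (perp y)‖ := by
        rw [norm_sq_smul_apply_perp_of_det_eq_one hA, map_add, map_smul, map_smul]
        refine (norm_add_le _ _).trans_eq ?_
        rw [norm_smul, norm_smul, Real.norm_eq_abs, Real.norm_of_nonneg (by positivity)]
    _ ≤ (‖𝒯 A‖ * ‖x‖ * ‖y‖) * ‖g y‖ + ‖x‖ ^ 2 * (‖g‖ * ‖y‖) := by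
        gcongr
        · exact (abs_real_inner_le_norm _ _).trans
            (by gcongr; exact (𝒯 A).le_opNorm_of_le (norm_perp x).le)
        · exact (g.le_opNorm _).trans_eq (by rw [norm_perp])
    _ = ‖y‖ * (‖x‖ * (‖𝒯 A‖ * ‖g y‖ + ‖g‖ * ‖x‖)) := by ring

lemma norm_apply_mul_norm_mul_le_of_det_eq_one {A : Matrix (Fin 2) (Fin 2) ℝ} (hA : A.det = 1)
    (g : ℝ² →L[ℝ] ℝ²) {Λ : ℝ} (hAΛ : ‖𝒯 A‖ ≤ Λ) (hgΛ : ‖g‖ ≤ Λ) (x : ℝ²) :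
    ‖𝒯 A x‖ * ‖g * 𝒯 A‖ ≤ 3 * Λ * max ‖x‖ ‖g (𝒯 A x)‖ := by
  set y := 𝒯 A x
  set R := max ‖x‖ ‖g y‖
  have hΛ : 0 ≤ Λ := (norm_nonneg _).trans hAΛ
  rcases eq_or_ne x 0 with rfl | hx
  · simp only [y, map_zero, norm_zero, zero_mul]; positivity
  have hx' : 0 < ‖x‖ := norm_pos_iff.mpr hx
  have hy : ‖y‖ ≤ Λ * ‖x‖ := ((𝒯 A).le_opNorm x).trans (by gcongr)
  have hcomp : ‖x‖ * ‖g * 𝒯 A‖ ≤ ‖g y‖ + ‖g (𝒯 A (perp x))‖ :=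
    norm_mul_opNorm_le_add_apply_perp _ x
  have hperp : ‖y‖ * ‖g (𝒯 A (perp x))‖ ≤ ‖x‖ * (Λ * R + Λ * R) :=
    (norm_mul_norm_apply_perp_le hA g x).trans
      (by gcongr; exacts [le_max_right _ _, le_max_left _ _])
  refine le_of_mul_le_mul_left ?_ hx'
  calc ‖x‖ * (‖y‖ * ‖g * 𝒯 A‖) ≤ ‖y‖ * ‖g y‖ + ‖y‖ * ‖g (𝒯 A (perp x))‖ := by
        nlinarith [norm_nonneg y]
    _ ≤ Λ * ‖x‖ * R + ‖x‖ * (Λ * R + Λ * R) := by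
        gcongr
        exact le_max_right _ _
    _ = ‖x‖ * (3 * Λ * R) := by ring

def IsSolution (E : ℝ) (ω u : ℤ → ℝ) : Prop :=
  ∀ n : ℤ, u (n + 1) + u (n - 1) + (ω n - E) * u n = 0

def solVec (u : ℤ → ℝ) (n : ℤ) : ℝ² := !₂[u (n + 1), u n]

lemma shiftZ_shiftZ (a b : ℤ) (ω : ℤ → ℝ) : shiftZ a (shiftZ b ω) = shiftZ (a + b) ω := by
  funext m; simp only [shiftZ, add_assoc]

lemma shiftZ_zero (ω : ℤ → ℝ) : shiftZ 0 ω = ω := by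
  funext m; simp [shiftZ]

lemma shiftZ_mem {Ω : Set (ℤ → ℝ)} (hΩ : shift '' Ω = Ω) {ω : ℤ → ℝ} (hω : ω ∈ Ω) (n : ℤ) :
    shiftZ n ω ∈ Ω := by
  induction n using Int.induction_on with
  | zero => rwa [shiftZ_zero]
  | succ i ih =>
    rw [← hΩ, add_comm, ← shiftZ_shiftZ]
    exact Set.mem_image_of_mem _ ih
  | pred i ih =>
    rw [← hΩ] at ih
    obtain ⟨ω₀, hω₀, h⟩ := ih
    rwa [sub_eq_neg_add, ← shiftZ_shiftZ, ← h, shift, shiftZ_shiftZ, neg_add_cancel, shiftZ_zero]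

lemma det_cocP (E : ℝ) (m : ℕ) (ω : ℤ → ℝ) : (cocP E m ω).det = 1 := by
  induction m with
  | zero => simp [cocP]
  | succ k ih => rw [cocP, Matrix.det_mul, ih, transferMat, Matrix.det_fin_two_of]; ring

lemma cocP_add (E : ℝ) (m k : ℕ) (ω : ℤ → ℝ) :
    cocP E (m + k) ω = cocP E k (shiftZ m ω) * cocP E m ω := by
  induction k with
  | zero => simp [cocP]
  | succ j ih =>
    rw [← add_assoc, cocP, cocP, ih, shiftZ_shiftZ, Matrix.mul_assoc]
    push_cast; ring_nf

section Solutions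

variable {E : ℝ} {ω u : ℤ → ℝ}

lemma IsSolution.transferMat_apply_solVec (hu : IsSolution E ω u) (n : ℤ) :
    𝒯 (transferMat E (shiftZ n ω)) (solVec u n) = solVec u (n + 1) := by
  have h := hu (n + 1)
  rw [add_sub_cancel_right] at h
  ext i
  fin_cases i <;>
    simp only [solVec, transferMat, shiftZ, add_comm 1 n, Matrix.ofLp_toEuclideanCLM,
      Matrix.mulVec_fin_two, Matrix.of_apply, Matrix.cons_val_zero, Matrix.cons_val_one,
      Fin.zero_eta, Fin.mk_one] <;>
    linarith

lemma IsSolution.cocP_apply_solVec (hu : IsSolution E ω u) (j : ℤ) (m : ℕ) :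
    𝒯 (cocP E m (shiftZ j ω)) (solVec u j) = solVec u (j + m) := by
  induction m with
  | zero => simp [cocP]
  | succ k ih =>
    rw [cocP, map_mul, mul_apply_eq_comp, ih, shiftZ_shiftZ, add_comm (k : ℤ),
      hu.transferMat_apply_solVec]
    push_cast; ring_nf

lemma IsSolution.eq_zero_of_solVec_zero (hu : IsSolution E ω u) (h : solVec u 0 = 0) (n : ℤ) :
    u n = 0 := by
  have h0 : u 0 = 0 := by simpa [solVec] using congrArg (· 1) h
  have h1 : u 1 = 0 := by simpa [solVec] using congrArg (· 0) h
  suffices ∀ n : ℤ, u n = 0 ∧ u (n + 1) = 0 from (this n).1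
  intro n
  induction n using Int.induction_on with
  | zero => exact ⟨h0, h1⟩
  | succ i ih =>
    have := hu (i + 1)
    rw [add_sub_cancel_right, ih.1, ih.2] at this
    exact ⟨ih.2, by linarith⟩
  | pred i ih =>
    have := hu (-i)
    rw [ih.1, ih.2] at this
    exact ⟨by linarith, by rw [sub_add_cancel]; exact ih.1⟩

end Solutions

lemma tendsto_mul_pow_div_exp_atTop (D : ℝ) {c : ℝ} (hc : 0 < c) (k : ℕ) :
    Tendsto (fun n : ℕ => D * (2 + (n : ℝ)) ^ k / Real.exp (c * n)) atTop (𝓝 0) := by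
  have h := ((tendsto_pow_const_div_const_pow_of_one_lt k (Real.one_lt_exp_iff.2 hc)).comp
    (tendsto_add_atTop_nat 2)).const_mul (D * Real.exp c ^ 2)
  rw [mul_zero] at h
  refine h.congr fun n => ?_
  simp only [Function.comp_apply, Nat.cast_add, Nat.cast_ofNat, ← Real.exp_nat_mul]
  field_simp
  rw [show c * ((n : ℝ) + 2) = 2 * c + c * n by ring, Real.exp_add]; ring

lemma exp_le_and_le_exp_of_abs_inv_mul_log_sub_le {P L ε m : ℝ} (hP : 0 ≤ P) (hm : 0 < m)
    (hεL : ε < L) (h : |1 / m * Real.log P - L| ≤ ε) :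
    Real.exp ((L - ε) * m) ≤ P ∧ P ≤ Real.exp ((L + ε) * m) := by
  rw [abs_le, one_div_mul_eq_div, le_sub_iff_add_le, sub_le_iff_le_add, le_div_iff₀ hm,
    div_le_iff₀ hm] at h
  have hP' : 0 < P := hP.lt_of_ne fun h0 => by
    rw [← h0, Real.log_zero] at h; nlinarith
  exact ⟨(Real.le_log_iff_exp_le hP').1 (by linarith),
    (Real.log_le_iff_le_exp hP').1 (by linarith)⟩

lemma IsUniformAt.exists_exp_bounds {Ω : Set (ℤ → ℝ)} {E L : ℝ} (h : IsUniformAt Ω E L)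
    {ε : ℝ} (hε : 0 < ε) (hεL : ε < L) :
    ∃ N : ℕ, ∀ m : ℕ, N ≤ m → ∀ ω ∈ Ω,
      Real.exp ((L - ε) * m) ≤ opNorm (cocP E m ω) ∧
        opNorm (cocP E m ω) ≤ Real.exp ((L + ε) * m) := by
  obtain ⟨N, hN⟩ := h ε hε
  refine ⟨max N 1, fun m hm ω hω => ?_⟩
  have hm' : N ≤ m ∧ 1 ≤ m := max_le_iff.1 hm
  have := hN m (by simpa using hm'.1) ω hω
  simp only [coc, Nat.cast_nonneg, if_true, Int.toNat_natCast, Nat.abs_cast,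
    Int.cast_natCast] at this
  exact exp_le_and_le_exp_of_abs_inv_mul_log_sub_le (norm_nonneg _)
    (by exact_mod_cast hm'.2) hεL this

lemma IsUniformAt.exists_norm_solVec_growth {Ω : Set (ℤ → ℝ)} (hΩ : shift '' Ω = Ω) {E L : ℝ}
    (h : IsUniformAt Ω E L) (hL : 0 < L) :
    ∃ N : ℕ, ∀ n : ℕ, N ≤ n → ∀ ω ∈ Ω, ∀ u : ℤ → ℝ, IsSolution E ω u →
      ‖solVec u 0‖ * Real.exp (L / 4 * n) ≤ 3 * max ‖solVec u (-n)‖ ‖solVec u n‖ := by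
  obtain ⟨N, hN⟩ := h.exists_exp_bounds (ε := L / 4) (by positivity) (by linarith)
  refine ⟨N, fun n hn ω hω u hu => ?_⟩
  have hω' : shiftZ (-n) ω ∈ Ω := shiftZ_mem hΩ hω _
  set A := cocP E n (shiftZ (-n) ω)
  set B := cocP E n ω
  have hA : 𝒯 A (solVec u (-n)) = solVec u 0 := by
    simpa using hu.cocP_apply_solVec (-n) n
  have hB : 𝒯 B (solVec u 0) = solVec u n := by
    simpa [shiftZ_zero] using hu.cocP_apply_solVec 0 n
  have hBA : cocP E (n + n) (shiftZ (-n) ω) = B * A := by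
    rw [cocP_add, shiftZ_shiftZ, add_neg_cancel, shiftZ_zero]
  have hupper := norm_apply_mul_norm_mul_le_of_det_eq_one (det_cocP E n _) (𝒯 B)
    (hN n hn _ hω').2 (hN n hn ω hω).2 (solVec u (-n))
  rw [hA, hB, ← map_mul, ← hBA] at hupper
  have hlower := (hN (n + n) (by omega) _ hω').1
  refine le_of_mul_le_mul_right ?_ (Real.exp_pos ((L + L / 4) * n))
  calc ‖solVec u 0‖ * Real.exp (L / 4 * n) * Real.exp ((L + L / 4) * n)
      = ‖solVec u 0‖ * Real.exp ((L - L / 4) * ↑(n + n)) := by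
        rw [mul_assoc, ← Real.exp_add]; push_cast; ring_nf
    _ ≤ ‖solVec u 0‖ * opNorm (cocP E (n + n) (shiftZ (-n) ω)) := by gcongr
    _ ≤ _ := hupper
    _ = _ := by ring

lemma norm_solVec_le {u : ℤ → ℝ} {C : ℝ} {k : ℕ}
    (hu : ∀ n : ℤ, |u n| ≤ C * (1 + ((|n| : ℤ) : ℝ)) ^ k) (m : ℤ) :
    ‖solVec u m‖ ≤ 2 * C * (2 + ((|m| : ℤ) : ℝ)) ^ k := by
  have hC : 0 ≤ C := by simpa using (abs_nonneg _).trans (hu 0)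
  set K := C * (2 + ((|m| : ℤ) : ℝ)) ^ k
  have hbound : ∀ j : ℤ, |j| ≤ |m| + 1 → |u j| ≤ K := fun j hj => by
    have : ((|j| : ℤ) : ℝ) ≤ (|m| : ℤ) + 1 := by exact_mod_cast hj
    exact (hu j).trans (mul_le_mul_of_nonneg_left
      (pow_le_pow_left₀ (by positivity) (by linarith) k) hC)
  have h₁ := hbound (m + 1) (abs_add_le m 1)
  have h₀ := hbound m (by linarith)
  rw [show 2 * C * (2 + ((|m| : ℤ) : ℝ)) ^ k = 2 * K by ring, EuclideanSpace.norm_eq,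
    Real.sqrt_le_left (by positivity)]
  simp only [solVec, Fin.sum_univ_two, Real.norm_eq_abs, sq_abs, Matrix.cons_val_zero,
    Matrix.cons_val_one]
  nlinarith [abs_nonneg (u m), abs_nonneg (u (m + 1)), sq_abs (u m), sq_abs (u (m + 1))]

theorem no_polynomially_bounded_solutions_general
    (A : Finset ℝ) (Ω : Set (ℤ → ℝ)) (μ : Measure (ℤ → ℝ))
    (hsub : IsSubshift A Ω)
    (E : ℝ) (hunif : IsUniformAt Ω E (lyap μ E)) (hpos : 0 < lyap μ E) :
    ∀ ω ∈ Ω, ∀ u : ℤ → ℝ,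
      (∀ n : ℤ, u (n + 1) + u (n - 1) + (ω n - E) * u n = 0) →
      (∃ C > (0 : ℝ), ∃ k : ℕ, ∀ n : ℤ, |u n| ≤ C * (1 + ((|n| : ℤ) : ℝ)) ^ k) →
      ∀ n : ℤ, u n = 0 := by
  obtain ⟨N, hN⟩ := hunif.exists_norm_solVec_growth hsub.inv hpos
  rintro ω hω u hu ⟨C, -, k, hbd⟩ n
  by_contra hn
  have hu₀ : 0 < ‖solVec u 0‖ :=
    norm_pos_iff.2 fun h => hn (IsSolution.eq_zero_of_solVec_zero hu h n)
  obtain ⟨m, hmN, hm⟩ := ((eventually_ge_atTop N).and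
    ((tendsto_mul_pow_div_exp_atTop (6 * C) (by positivity : 0 < lyap μ E / 4) k).eventually
      (gt_mem_nhds hu₀))).exists
  rw [div_lt_iff₀ (Real.exp_pos _)] at hm
  have hpoly : max ‖solVec u (-m)‖ ‖solVec u m‖ ≤ 2 * C * (2 + (m : ℝ)) ^ k :=
    max_le (by simpa using norm_solVec_le hbd (-m)) (by simpa using norm_solVec_le hbd m)
  linarith [hN m hmN ω hω u hu]

/-- If `M^E` is uniform with `γ(E) > 0`, then every polynomially bounded solution
of the difference equation `u(n+1) + u(n-1) + (ω(n) - E) u(n) = 0` vanishes identically. -/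
theorem no_polynomially_bounded_solutions
    (A : Finset ℝ) (Ω : Set (ℤ → ℝ)) (μ : Measure (ℤ → ℝ))
    (hsub : IsSubshift A Ω) (hmin : IsMinimalSubshift Ω)
    (hue : IsUniquelyErgodicWith Ω μ)
    (E : ℝ) (hunif : IsUniformAt Ω E (lyap μ E)) (hpos : 0 < lyap μ E) :
    ∀ ω ∈ Ω, ∀ u : ℤ → ℝ,
      (∀ n : ℤ, u (n + 1) + u (n - 1) + (ω n - E) * u n = 0) →
      (∃ C > (0 : ℝ), ∃ k : ℕ, ∀ n : ℤ, |u n| ≤ C * (1 + ((|n| : ℤ) : ℝ)) ^ k) →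
      ∀ n : ℤ, u n = 0 :=
  no_polynomially_bounded_solutions_general A Ω μ hsub E hunif hpos
end
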